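/- arXiv:2504.03419 — 2 statements merged into one kernel-verified Lean document; each statement's English description precedes it below -/
import Mathlib

section
/- Let a = (1-β)s'(p) - 1, b = u'(p) r'(e) ≤ 0, τ = τ_e/τ_x. The Jacobian J of the FSOE dynamics at (p,e) has a double zero eigenvalue (trace and determinant both zero) if and only if γ = τ a and τ a² + b β = 0; moreover, viewing this as the quadratic equation τ β² s'(p)² + (b - 2τ s'(p)(s'(p)-1)) β + (s'(p)-1)² = 0 in β, its discriminant is Δ_β = b(b - 4τ s'(p)(s'(p)-1)), which is nonnegative whenever b ≤ 0 and s'(p) ≥ 1, so the solutions β_± = 1 - 1/s'(p) + (-b ± √Δ_β)/(2τ s'(p)²) are real. -/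
/-!
At a double zero eigenvalue the trace condition forces `γ = τ a`, and substituting this into
the determinant condition `a γ + b β = 0` leaves `τ a² + b β = 0`. Since `a = (1 - β) S - 1`,
this is a quadratic in `β` whose discriminant simplifies to `b (b - 4 τ S (S - 1))`, a product
of two nonpositive factors when `b ≤ 0`, `τ ≥ 0` and `S ≥ 1`; the quadratic formula then gives
the two real roots `β_±`.
-/

open Matrix

section Jacobian

variable {τx τe a c d γ : ℝ}

theorem trace_jacobian_eq_zero_iff (hτx : τx ≠ 0) (hτe : τe ≠ 0) :
    (!![(1/τx) * a, (1/τx) * c; (1/τe) * d, (1/τe) * (-γ)] : Matrix (Fin 2) (Fin 2) ℝ).trace = 0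
      ↔ γ = τe / τx * a := by
  rw [trace_fin_two_of]
  field_simp
  constructor <;> intro h <;> linarith

theorem det_jacobian_eq_zero_iff (hτx : τx ≠ 0) (hτe : τe ≠ 0) :
    (!![(1/τx) * a, (1/τx) * c; (1/τe) * d, (1/τe) * (-γ)] : Matrix (Fin 2) (Fin 2) ℝ).det = 0
      ↔ a * γ + c * d = 0 := by
  have hdet : (!![(1/τx) * a, (1/τx) * c; (1/τe) * d, (1/τe) * (-γ)] :
      Matrix (Fin 2) (Fin 2) ℝ).det = -(a * γ + c * d) / (τx * τe) := by
    rw [det_fin_two_of]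
    field_simp
    ring
  rw [hdet, div_eq_zero_iff, neg_eq_zero, or_iff_left (mul_ne_zero hτx hτe)]

end Jacobian

theorem eq_mul_and_mul_add_eq_zero_iff {τ a b β γ : ℝ} :
    (γ = τ * a ∧ a * γ + b * β = 0) ↔ (γ = τ * a ∧ τ * a ^ 2 + b * β = 0) := by
  constructor <;> rintro ⟨rfl, h⟩ <;> exact ⟨rfl, by linear_combination h⟩

section DoubleZeroQuadratic

variable {τ S b : ℝ}

theorem discrim_double_zero_quadratic :
    discrim (τ * S ^ 2) (b - 2 * τ * S * (S - 1)) (τ * (S - 1) ^ 2) = b * (b - 4 * τ * S * (S - 1)) := by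
  rw [discrim]
  ring

theorem double_zero_discrim_nonneg (hτ : 0 ≤ τ) (hS : 1 ≤ S) (hb : b ≤ 0) :
    0 ≤ b * (b - 4 * τ * S * (S - 1)) := by
  have : 0 ≤ τ * S * (S - 1) := by
    have := sub_nonneg.mpr hS
    positivity
  exact mul_nonneg_of_nonpos_of_nonpos hb (by linarith)

theorem double_zero_quadratic_eq_zero_iff (hτ : τ ≠ 0) (hS : S ≠ 0)
    (hΔ : 0 ≤ b * (b - 4 * τ * S * (S - 1))) (β : ℝ) :
    τ * ((1 - β) * S - 1) ^ 2 + b * β = 0 ↔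
      β = 1 - 1/S + (-b + √(b * (b - 4 * τ * S * (S - 1)))) / (2 * τ * S ^ 2) ∨
      β = 1 - 1/S + (-b - √(b * (b - 4 * τ * S * (S - 1)))) / (2 * τ * S ^ 2) := by
  have hquad : τ * ((1 - β) * S - 1) ^ 2 + b * β
      = τ * S ^ 2 * (β * β) + (b - 2 * τ * S * (S - 1)) * β + τ * (S - 1) ^ 2 := by
    ring
  have hroot (s : ℝ) : (-(b - 2 * τ * S * (S - 1)) + s) / (2 * (τ * S ^ 2))
      = 1 - 1/S + (-b + s) / (2 * τ * S ^ 2) := by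
    field_simp
    ring
  have hroot' (s : ℝ) : (-(b - 2 * τ * S * (S - 1)) - s) / (2 * (τ * S ^ 2))
      = 1 - 1/S + (-b - s) / (2 * τ * S ^ 2) := by
    simpa only [← sub_eq_add_neg] using hroot (-s)
  rw [hquad, quadratic_eq_zero_iff (by positivity)
    (by rw [discrim_double_zero_quadratic, Real.mul_self_sqrt hΔ]), hroot, hroot']

end DoubleZeroQuadratic

theorem stmt6_general (S b re up β γ τx τe τ : ℝ) (hτx : 0 < τx) (hτe : 0 < τe)
    (hτ : τ = τe / τx) (hS : S > 1) (hb : b ≤ 0) (hbdef : b = up * re)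
    (a : ℝ)
    (J : Matrix (Fin 2) (Fin 2) ℝ)
    (hJ : J = !![(1/τx) * a, (1/τx) * (β * re);
                 (1/τe) * up, (1/τe) * (-γ)]) :
    ((J.trace = 0 ∧ J.det = 0) ↔ (γ = τ * a ∧ τ * a ^ 2 + b * β = 0)) ∧
    b * (b - 4 * τ * S * (S - 1)) ≥ 0 ∧
    (∀ βr : ℝ,
      (βr = 1 - 1/S + (-b + Real.sqrt (b * (b - 4 * τ * S * (S - 1)))) / (2 * τ * S ^ 2) ∨
       βr = 1 - 1/S + (-b - Real.sqrt (b * (b - 4 * τ * S * (S - 1)))) / (2 * τ * S ^ 2)) →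
      τ * ((1 - βr) * S - 1) ^ 2 + b * βr = 0) := by
  have hτpos : 0 < τ := hτ ▸ div_pos hτe hτx
  have hΔ := double_zero_discrim_nonneg hτpos.le hS.le hb
  refine ⟨?_, hΔ, fun βr hβr ↦
    (double_zero_quadratic_eq_zero_iff hτpos.ne' (by positivity) hΔ βr).mpr hβr⟩
  rw [hJ, trace_jacobian_eq_zero_iff hτx.ne' hτe.ne', det_jacobian_eq_zero_iff hτx.ne' hτe.ne',
    ← hτ, mul_assoc, mul_comm re, ← hbdef, mul_comm β, eq_mul_and_mul_add_eq_zero_iff]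

/-- Double zero eigenvalue of the FSOE Jacobian: trace and determinant vanish
iff `γ = τ a` and `τ a² + bβ = 0`; the discriminant `Δ_β = b(b - 4τ s'(s'-1))`
is nonnegative, so the solutions `β_±` are real and solve the double-zero
condition. -/
theorem stmt6 (S b re up β γ τx τe τ : ℝ) (hτx : 0 < τx) (hτe : 0 < τe)
    (hτ : τ = τe / τx) (hS : S > 1) (hb : b ≤ 0) (hbdef : b = up * re)
    (a : ℝ) (ha : a = (1-β) * S - 1)
    (J : Matrix (Fin 2) (Fin 2) ℝ)
    (hJ : J = !![(1/τx) * a, (1/τx) * (β * re);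
                 (1/τe) * up, (1/τe) * (-γ)]) :
    ((J.trace = 0 ∧ J.det = 0) ↔ (γ = τ * a ∧ τ * a ^ 2 + b * β = 0)) ∧
    b * (b - 4 * τ * S * (S - 1)) ≥ 0 ∧
    (∀ βr : ℝ,
      (βr = 1 - 1/S + (-b + Real.sqrt (b * (b - 4 * τ * S * (S - 1)))) / (2 * τ * S ^ 2) ∨
       βr = 1 - 1/S + (-b - Real.sqrt (b * (b - 4 * τ * S * (S - 1)))) / (2 * τ * S ^ 2)) →
      τ * ((1 - βr) * S - 1) ^ 2 + b * βr = 0) :=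
  stmt6_general S b re up β γ τx τe τ hτx hτe hτ hS hb hbdef a J hJ
end

section
/- If (1-β)s'(p) > 1 is required together with the double-zero-eigenvalue condition τ((1-β)s'(p)-1)² + u'(p)r'(e)β = 0 (with u'(p)r'(e) < 0, s'(p) > 1, τ > 0), then among the two roots β_± = 1 - 1/s'(p) + (-u'(p)r'(e) ± √Δ_β)/(2τ s'(p)²) of the associated quadratic, only β_- satisfies (1-β)s'(p) > 1. -/
/-- Among the two roots `β_±` of the double-zero-eigenvalue quadratic, only
`β_-` satisfies `(1-β)s'(p) > 1` (with `β_+ > 1 - 1/s'(p)` strictly when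
`u'(p)r'(e) < 0`). -/
theorem stmt9 (τ S b : ℝ) (hτ : 0 < τ) (hS : 1 < S) (hb : b < 0)
    (Δ βm βp : ℝ)
    (hΔ : Δ = b * (b - 4 * τ * S * (S - 1)))
    (hβm : βm = 1 - 1/S + (-b - Real.sqrt Δ) / (2 * τ * S ^ 2))
    (hβp : βp = 1 - 1/S + (-b + Real.sqrt Δ) / (2 * τ * S ^ 2)) :
    (1 - βm) * S > 1 ∧ ¬((1 - βp) * S > 1) ∧ βp > 1 - 1/S := by
  have hS0 : 0 < S := by linarith
  have hΔb : b ^ 2 < Δ := by nlinarith [mul_pos (show (0:ℝ) < 4*τ*S*(S-1) by nlinarith [mul_pos (mul_pos hτ hS0) (sub_pos.mpr hS)]) (show (0:ℝ) < -b by linarith)]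
  have hr : -b < Real.sqrt Δ := by
    rw [Real.lt_sqrt (by nlinarith)]
    nlinarith
  set r := Real.sqrt Δ with hrdef
  have hden : 0 < 2 * τ * S ^ 2 := by positivity
  refine ⟨?_, ?_, ?_⟩
  · rw [hβm]
    rw [gt_iff_lt, show (1 : ℝ) - (1 - 1/S + (-b - r) / (2 * τ * S ^ 2)) =
        1/S + (b + r) / (2 * τ * S ^ 2) by ring]
    have h1 : 0 < b + r := by linarith
    have : (1/S + (b + r) / (2 * τ * S ^ 2)) * S = 1 + (b + r) / (2 * τ * S) := by
      field_simp
    rw [this]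
    have : 0 < (b + r) / (2 * τ * S) := by positivity
    linarith
  · rw [hβp, not_lt]
    rw [show (1 : ℝ) - (1 - 1/S + (-b + r) / (2 * τ * S ^ 2)) =
        1/S - (r - b) / (2 * τ * S ^ 2) by ring]
    have h1 : 0 < r - b := by linarith
    have : (1/S - (r - b) / (2 * τ * S ^ 2)) * S = 1 - (r - b) / (2 * τ * S) := by
      field_simp
    rw [this]
    have : 0 < (r - b) / (2 * τ * S) := by positivity
    linarith
  · rw [hβp]
    have h1 : 0 < -b + r := by linarith
    have : 0 < (-b + r) / (2 * τ * S ^ 2) := by positivity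
    linarith
end
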